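/- Let (H, ⊳) be a right Post-Hopf algebra over a field K of characteristic zero that is connected as a coalgebra, with coradical filtration H^{≤n} = {x ∈ H : Δ̃⁽ⁿ⁾(x) = 0}. Then for every n ∈ ℕ: if x ∈ H^{≤n} and y ∈ H then x ⊳ y ∈ H^{≤n}. -/

import Mathlib

open TensorProduct

/-- A right Post-Hopf structure on a Hopf algebra `H`: `r x y = x ⊳ y`. -/
structure IsRightPostHopf (K H : Type*) [Field K] [Ring H] [HopfAlgebra K H]
    (r : H →ₗ[K] H →ₗ[K] H) : Prop where
  /-- `⊳` is compatible with the counit. -/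
  counit_r : ∀ x y : H,
    Coalgebra.counit (R := K) (r x y)
      = Coalgebra.counit (R := K) x * Coalgebra.counit (R := K) y
  /-- `⊳` is a coalgebra morphism: `Δ(x ⊳ y) = Δ(x) ⊳ Δ(y)` componentwise. -/
  comul_r : ∀ x y : H,
    Coalgebra.comul (R := K) (r x y)
      = TensorProduct.map₂ r r (Coalgebra.comul x) (Coalgebra.comul y)
  /-- `(x·y) ⊳ z = Σ (x ⊳ z⁽¹⁾)·(y ⊳ z⁽²⁾)`. -/
  mul_r : ∀ x y z : H,
    r (x * y) z
      = TensorProduct.lift ((LinearMap.mul K H).compl₁₂ (r x) (r y)) (Coalgebra.comul z)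
  /-- `(x ⊳ y) ⊳ z = x ⊳ (Σ (y ⊳ z⁽¹⁾)·z⁽²⁾)`. -/
  r_r : ∀ x y z : H,
    r (r x y) z
      = r x (TensorProduct.lift
          ((LinearMap.mul K H).compl₁₂ (r y) LinearMap.id) (Coalgebra.comul z))
  /-- The right multiplication `γ(z)(y) = y ⊳ z` is convolution invertible. -/
  conv_inv : ∃ β : H →ₗ[K] H →ₗ[K] H, ∀ x : H,
    TensorProduct.lift ((LinearMap.llcomp K H H H).compl₁₂ r.flip β) (Coalgebra.comul x)
        = Coalgebra.counit (R := K) x • (LinearMap.id : H →ₗ[K] H)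
    ∧ TensorProduct.lift ((LinearMap.llcomp K H H H).compl₁₂ β r.flip) (Coalgebra.comul x)
        = Coalgebra.counit (R := K) x • (LinearMap.id : H →ₗ[K] H)



open TensorProduct

universe u v

/-- A bundled `K`-module, used to form iterated tensor powers. -/
structure ModPack (K : Type u) [CommSemiring K] : Type (max u (v + 1)) where
  carrier : Type v
  [acg : AddCommGroup carrier]
  [mod : Module K carrier]

attribute [instance] ModPack.acg ModPack.mod

/-- `tpk K H n` is the `(n+1)`-fold tensor power `H ⊗ (H ⊗ (⋯ ⊗ H))`. -/
noncomputable def tpk (K : Type u) [CommSemiring K]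
    (H : Type v) [AddCommGroup H] [Module K H] : ℕ → ModPack.{u, v} K
  | 0 => ⟨H⟩
  | n + 1 => ⟨H ⊗[K] (tpk K H n).carrier⟩

/-- The reduced coproduct `Δ̃(x) = Δ(x) - 1 ⊗ x - x ⊗ 1 + ε(x) (1 ⊗ 1)`
(the unique linear map with `Δ̃(1) = 0` and `Δ̃(x) = Δ(x) - 1 ⊗ x - x ⊗ 1` on `ker ε`). -/
noncomputable def redComul (K : Type u) [CommSemiring K]
    (H : Type v) [Ring H] [Bialgebra K H] : H →ₗ[K] H ⊗[K] H :=
  Coalgebra.comul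
    - TensorProduct.mk K H H 1
    - (TensorProduct.mk K H H).flip 1
    + (Coalgebra.counit (R := K)).smulRight ((1 : H) ⊗ₜ[K] (1 : H))

/-- Applying `Δ̃` to the first tensor factor: `Δ̃ ⊗ id^{⊗ n}`. -/
noncomputable def frontMap (K : Type u) [CommSemiring K]
    (H : Type v) [Ring H] [Bialgebra K H] :
    (n : ℕ) → (tpk K H n).carrier →ₗ[K] (tpk K H (n + 1)).carrier
  | 0 => redComul K H
  | n + 1 =>
      (TensorProduct.assoc K H H (tpk K H n).carrier).toLinearMap
        ∘ₗ TensorProduct.map (redComul K H) LinearMap.id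

/-- The iterated reduced coproducts: `Δ̃⁽⁰⁾ = ρ` (with `ρ(x) = x - ε(x)1`), `Δ̃⁽¹⁾ = Δ̃`,
and `Δ̃⁽ᵏ⁺¹⁾ = (Δ̃ ⊗ id^{⊗ k}) ∘ Δ̃⁽ᵏ⁾`. -/
noncomputable def redIter (K : Type u) [CommSemiring K]
    (H : Type v) [Ring H] [Bialgebra K H] :
    (n : ℕ) → H →ₗ[K] (tpk K H n).carrier
  | 0 => LinearMap.id - (Coalgebra.counit (R := K)).smulRight (1 : H)
  | 1 => redComul K H
  | n + 2 => frontMap K H (n + 1) ∘ₗ redIter K H (n + 1)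

/-!
The unit acts trivially, `1 ⊳ y = ε(y) 1`: by `(x·y) ⊳ z = (x ⊳ z⁽¹⁾)·(y ⊳ z⁽²⁾)` with `x = 1`,
left multiplication by `1 ⊳ –` is a left convolution unit of `γ`, hence equals the convolution
unit once `γ` has a convolution inverse. Since `⊳` is a coalgebra morphism, this gives
`Δ̃(x ⊳ y) = Δ̃(x) ⊳ Δ(y)` componentwise, and iterating,
`Δ̃⁽ⁿ⁾(x ⊳ y) = Δ̃⁽ⁿ⁾(x) ⊳ Δ⁽ⁿ⁾(y)`, which vanishes whenever `Δ̃⁽ⁿ⁾(x)` does.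
-/

open LinearMap WithConv

theorem TensorProduct.assoc_map₂_map₂ {R A B C A' B' C' A'' B'' C'' : Type*} [CommSemiring R]
    [AddCommMonoid A] [AddCommMonoid B] [AddCommMonoid C] [AddCommMonoid A'] [AddCommMonoid B']
    [AddCommMonoid C'] [AddCommMonoid A''] [AddCommMonoid B''] [AddCommMonoid C'']
    [Module R A] [Module R B] [Module R C] [Module R A'] [Module R B'] [Module R C']
    [Module R A''] [Module R B''] [Module R C'']
    (f : A →ₗ[R] B →ₗ[R] C) (g : A' →ₗ[R] B' →ₗ[R] C') (h : A'' →ₗ[R] B'' →ₗ[R] C'')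
    (p : (A ⊗[R] A') ⊗[R] A'') (q : (B ⊗[R] B') ⊗[R] B'') :
    TensorProduct.assoc R C C' C'' (map₂ (map₂ f g) h p q)
      = map₂ f (map₂ g h) (TensorProduct.assoc R A A' A'' p)
          (TensorProduct.assoc R B B' B'' q) := by
  have : (map₂ (map₂ f g) h).compr₂ (TensorProduct.assoc R C C' C'').toLinearMap
      = (map₂ f (map₂ g h)).compl₁₂ (TensorProduct.assoc R A A' A'').toLinearMap
          (TensorProduct.assoc R B B' B'').toLinearMap := by
    ext
    rfl
  exact congr($this p q)

theorem Coalgebra.lift_llcomp_comul_eq_convMul {R C M : Type*} [CommSemiring R]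
    [AddCommMonoid C] [Module R C] [Coalgebra R C] [AddCommMonoid M] [Module R M]
    (f g : C →ₗ[R] Module.End R M) (x : C) :
    lift ((llcomp R M M M).compl₁₂ f g) (comul x) = (toConv f * toConv g) x := by
  rw [convMul_apply]
  induction comul (R := R) x using TensorProduct.induction_on with
  | zero => simp
  | tmul a b => rfl
  | add p q hp hq => simp only [map_add, hp, hq]

section

variable (K : Type u) [CommSemiring K] (H : Type v) [Ring H] [Bialgebra K H]

noncomputable def tpkMap₂ (r : H →ₗ[K] H →ₗ[K] H) :
    (n : ℕ) → (tpk K H n).carrier →ₗ[K] (tpk K H n).carrier →ₗ[K] (tpk K H n).carrier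
  | 0 => r
  | n + 1 => map₂ r (tpkMap₂ r n)

noncomputable def comulFront : (n : ℕ) → (tpk K H n).carrier →ₗ[K] (tpk K H (n + 1)).carrier
  | 0 => (Coalgebra.comul : H →ₗ[K] H ⊗[K] H)
  | n + 1 => (TensorProduct.assoc K H H (tpk K H n).carrier).toLinearMap
      ∘ₗ map Coalgebra.comul LinearMap.id

noncomputable def comulIter : (n : ℕ) → H →ₗ[K] (tpk K H n).carrier
  | 0 => LinearMap.id
  | n + 1 => comulFront K H n ∘ₗ comulIter n

variable {K H}

theorem redComul_one : redComul K H 1 = 0 := by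
  simp [redComul, Bialgebra.comul_one, Algebra.TensorProduct.one_def]

theorem redIter_succ (n : ℕ) : redIter K H (n + 1) = frontMap K H n ∘ₗ redIter K H n := by
  cases n with
  | zero =>
    ext z
    change redComul K H z = redComul K H (z - Coalgebra.counit (R := K) z • 1)
    simp [redComul_one]
  | succ n => rfl

end

namespace IsRightPostHopf

open Coalgebra

variable {K : Type u} [Field K] {H : Type v} [Ring H] [HopfAlgebra K H]
  {r : H →ₗ[K] H →ₗ[K] H}

theorem r_one_apply (hr : IsRightPostHopf K H r) (y : H) :
    r 1 y = counit (R := K) y • (1 : H) := by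
  obtain ⟨β, hβ⟩ := hr.conv_inv
  have hγβ : toConv r.flip * toConv β = 1 := by
    ext1; ext1 x
    rw [← lift_llcomp_comul_eq_convMul, (hβ x).1]
    ext w
    simp [Algebra.algebraMap_eq_smul_one]
  set L : WithConv (H →ₗ[K] Module.End K H) := toConv (mul K H ∘ₗ r 1)
  have hLγ : L * toConv r.flip = toConv r.flip := by
    ext z w
    rw [← lift_llcomp_comul_eq_convMul, flip_apply, ← one_mul w, hr.mul_r, one_mul]
    induction comul (R := K) z using TensorProduct.induction_on with
    | zero => simp
    | tmul a b => rfl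
    | add p q hp hq => simp only [map_add, LinearMap.add_apply, hp, hq]
  have hL : L = 1 := by
    calc L = L * (toConv r.flip * toConv β) := by rw [hγβ, mul_one]
      _ = 1 := by rw [← mul_assoc, hLγ, hγβ]
  simpa [L, Algebra.algebraMap_eq_smul_one] using congr($hL y 1)

theorem r_one (hr : IsRightPostHopf K H r) : r 1 = Algebra.linearMap K H ∘ₗ counit := by
  ext y
  simp [hr.r_one_apply, Algebra.algebraMap_eq_smul_one]

theorem map₂_one_tmul_comul (hr : IsRightPostHopf K H r) (x y : H) :
    map₂ r r (1 ⊗ₜ[K] x) (comul y) = 1 ⊗ₜ[K] r x y := by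
  rw [map₂_apply_tmul, hr.r_one, ← map_comp_rTensor, comp_apply, rTensor_counit_comul]
  simp

theorem map₂_tmul_one_comul (hr : IsRightPostHopf K H r) (x y : H) :
    map₂ r r (x ⊗ₜ[K] 1) (comul y) = r x y ⊗ₜ[K] 1 := by
  rw [map₂_apply_tmul, hr.r_one, ← map_comp_lTensor, comp_apply, lTensor_counit_comul]
  simp

theorem redComul_r (hr : IsRightPostHopf K H r) (x y : H) :
    redComul K H (r x y) = map₂ r r (redComul K H x) (comul y) := by
  simp only [redComul, LinearMap.add_apply, LinearMap.sub_apply, mk_apply, flip_apply,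
    smulRight_apply, map_add, map_sub, map_smul, LinearMap.smul_apply, hr.comul_r,
    hr.counit_r, hr.map₂_one_tmul_comul, hr.map₂_tmul_one_comul, hr.r_one_apply,
    tmul_smul, mul_smul]

theorem frontMap_tpkMap₂ (hr : IsRightPostHopf K H r) :
    ∀ (n : ℕ) (t s : (tpk K H n).carrier),
      frontMap K H n (tpkMap₂ K H r n t s)
        = tpkMap₂ K H r (n + 1) (frontMap K H n t) (comulFront K H n s)
  | 0 => fun x y => hr.redComul_r x y
  | n + 1 => by
    have : (tpkMap₂ K H r (n + 1)).compr₂ (frontMap K H (n + 1))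
        = (tpkMap₂ K H r (n + 2)).compl₁₂ (frontMap K H (n + 1)) (comulFront K H (n + 1)) := by
      apply TensorProduct.ext
      refine LinearMap.ext₂ fun a t => ?_
      apply TensorProduct.ext
      refine LinearMap.ext₂ fun b s => ?_
      change TensorProduct.assoc K H H _ (redComul K H (r a b) ⊗ₜ tpkMap₂ K H r n t s)
        = map₂ r (tpkMap₂ K H r (n + 1)) (TensorProduct.assoc K H H _ (redComul K H a ⊗ₜ t))
            (TensorProduct.assoc K H H _ (comul b ⊗ₜ s))
      rw [hr.redComul_r]
      exact TensorProduct.assoc_map₂_map₂ r r (tpkMap₂ K H r n) (redComul K H a ⊗ₜ t)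
        (comul b ⊗ₜ s)
    exact fun t s => congr($this t s)

theorem redIter_r (hr : IsRightPostHopf K H r) :
    ∀ (n : ℕ) (x y : H),
      redIter K H n (r x y) = tpkMap₂ K H r n (redIter K H n x) (comulIter K H n y)
  | 0, x, y => by
    change r x y - counit (R := K) (r x y) • 1 = r (x - counit (R := K) x • 1) y
    rw [hr.counit_r, map_sub, map_smul, LinearMap.sub_apply, LinearMap.smul_apply,
      hr.r_one_apply, mul_smul]
  | n + 1, x, y => by
    rw [redIter_succ, comp_apply, comp_apply, hr.redIter_r n, hr.frontMap_tpkMap₂]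
    rfl

end IsRightPostHopf

theorem statement7_general {K : Type*} [Field K]
    {H : Type*} [Ring H] [HopfAlgebra K H]
    (r : H →ₗ[K] H →ₗ[K] H) (hr : IsRightPostHopf K H r) :
    ∀ (n : ℕ) (x y : H), redIter K H n x = 0 → redIter K H n (r x y) = 0 := by
  intro n x y hx
  rw [hr.redIter_r n x y, hx, map_zero, LinearMap.zero_apply]

/-- In a connected right Post-Hopf algebra, the coradical filtration
`H^{≤n} = ker Δ̃⁽ⁿ⁾` satisfies `H^{≤n} ⊳ H ⊆ H^{≤n}`. -/
theorem statement7 {K : Type*} [Field K] [CharZero K]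
    {H : Type*} [Ring H] [HopfAlgebra K H]
    (r : H →ₗ[K] H →ₗ[K] H) (hr : IsRightPostHopf K H r)
    (hconn : ∀ x : H, ∃ n : ℕ, redIter K H n x = 0) :
    ∀ (n : ℕ) (x y : H), redIter K H n x = 0 → redIter K H n (r x y) = 0 :=
  statement7_general r hr
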